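/- arXiv:0908.0729 — 6 statements merged into one kernel-verified Lean document; each statement's English description precedes it below -/
import Mathlib

section
/- Let A be a unital subalgebra of the bounded operators on a Hilbert space H. Suppose there exist linear submanifolds M, N ⊆ H such that (1) TM ⊆ M and TN ⊆ N for every T ∈ A, (2) M ∩ N = {0} and M + N is dense in H, and (3) the closures of M and N have nonzero intersection. Then A does not have the closability property, i.e., there exists a densely defined linear transformation commuting with A which is not closable. -/
/-!
Let `X` be the projection onto `M` along `N`, defined on the dense domain `M + N`; invariance
of `M` and `N` under `A` makes `X` commute with `A`. If `mₖ → x` in `M` and `nₖ → x` in `N`,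
then `(mₖ - nₖ, mₖ) → (0, x)` along the graph of `X`, so for `x ≠ 0` the closure of the graph
is not the graph of an operator.
-/

/-- A (possibly unbounded) densely defined linear transformation `X` commutes with a
set `A` of bounded operators if the domain of `X` is invariant under every `T ∈ A`
and `X T h = T X h` on the domain. -/
def Commutes {H : Type*} [NormedAddCommGroup H] [InnerProductSpace ℂ H]
    (A : Set (H →L[ℂ] H)) (X : H →ₗ.[ℂ] H) : Prop :=
  ∀ T ∈ A, ∀ h : X.domain, ∃ h' : X.domain, (h' : H) = T h ∧ X h' = T (X h)

/-- A set of bounded operators has the closability property if every densely defined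
linear transformation commuting with it is closable. -/
def ClosabilityProperty {H : Type*} [NormedAddCommGroup H] [InnerProductSpace ℂ H]
    (A : Set (H →L[ℂ] H)) : Prop :=
  ∀ X : H →ₗ.[ℂ] H, Dense (X.domain : Set H) → Commutes A X → X.IsClosable

namespace LinearPMap

section Projection

variable {R E : Type*} [Ring R] [AddCommGroup E] [Module R E]
  {M N : Submodule R E} (h : Disjoint M N)

noncomputable def projAlong : E →ₗ.[R] E :=
  LinearPMap.sup ⟨M, M.subtype⟩ ⟨N, 0⟩ (sup_h_of_disjoint _ _ h)

theorem projAlong_apply {m n : E} (hm : m ∈ M) (hn : n ∈ N) (z : (projAlong h).domain)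
    (hz : m + n = z) : projAlong h z = m :=
  (sup_apply (sup_h_of_disjoint _ _ h) ⟨m, hm⟩ ⟨n, hn⟩ z hz).trans (by simp)

theorem add_mem_graph_projAlong {m n : E} (hm : m ∈ M) (hn : n ∈ N) :
    (m + n, m) ∈ (projAlong h).graph :=
  (projAlong h).mem_graph_iff.mpr
    ⟨⟨m + n, Submodule.add_mem_sup hm hn⟩, rfl, projAlong_apply h hm hn _ rfl⟩

theorem map_mem_domain_projAlong (T : E →ₗ[R] E) (hTM : ∀ x ∈ M, T x ∈ M)
    (hTN : ∀ x ∈ N, T x ∈ N) (z : (projAlong h).domain) : T z ∈ (projAlong h).domain := by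
  obtain ⟨m, hm, n, hn, hmn⟩ := Submodule.mem_sup.mp z.2
  rw [← hmn, T.map_add]
  exact Submodule.add_mem_sup (hTM m hm) (hTN n hn)

theorem projAlong_map (T : E →ₗ[R] E) (hTM : ∀ x ∈ M, T x ∈ M) (hTN : ∀ x ∈ N, T x ∈ N)
    (z : (projAlong h).domain) :
    projAlong h ⟨T z, map_mem_domain_projAlong h T hTM hTN z⟩ = T (projAlong h z) := by
  obtain ⟨m, hm, n, hn, hmn⟩ := Submodule.mem_sup.mp z.2
  rw [projAlong_apply h hm hn z hmn,
    projAlong_apply h (hTM m hm) (hTN n hn) _ (by rw [Subtype.coe_mk, ← hmn, T.map_add])]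

end Projection

section Closability

variable {R E F : Type*} [CommRing R] [TopologicalSpace R]
  [AddCommGroup E] [Module R E] [TopologicalSpace E] [ContinuousAdd E] [ContinuousSMul R E]
  [AddCommGroup F] [Module R F] [TopologicalSpace F] [ContinuousAdd F] [ContinuousSMul R F]

theorem not_isClosable_of_mem_closure_graph {f : E →ₗ.[R] F} {y : F} (hy : y ≠ 0)
    (hmem : ((0 : E), y) ∈ _root_.closure (f.graph : Set (E × F))) : ¬ f.IsClosable := by
  rintro ⟨g, hg⟩
  rw [← Submodule.topologicalClosure_coe, hg] at hmem
  exact hy (g.graph_fst_eq_zero_snd hmem rfl)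

end Closability

theorem zero_mem_closure_graph_projAlong {R E : Type*} [Ring R] [AddCommGroup E] [Module R E]
    [TopologicalSpace E] [IsTopologicalAddGroup E] {M N : Submodule R E} (h : Disjoint M N)
    {x : E} (hxM : x ∈ _root_.closure (M : Set E)) (hxN : x ∈ _root_.closure (N : Set E)) :
    ((0 : E), x) ∈ _root_.closure ((projAlong h).graph : Set (E × E)) := by
  have hcont : Continuous fun p : E × E => (p.1 - p.2, p.1) :=
    (continuous_fst.sub continuous_snd).prodMk continuous_fst
  simpa using map_mem_closure₂ (f := fun m n : E => (m - n, m)) hcont hxM hxN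
    fun m hm n hn => sub_eq_add_neg m n ▸ add_mem_graph_projAlong h hm (N.neg_mem hn)

end LinearPMap

open LinearPMap

theorem commutes_projAlong {H : Type*} [NormedAddCommGroup H] [InnerProductSpace ℂ H]
    {A : Set (H →L[ℂ] H)} {M N : Submodule ℂ H} (h : Disjoint M N)
    (hM : ∀ T ∈ A, ∀ x ∈ M, T x ∈ M) (hN : ∀ T ∈ A, ∀ x ∈ N, T x ∈ N) :
    Commutes A (projAlong h) := fun T hT z =>
  ⟨_, rfl, projAlong_map h (T : H →ₗ[ℂ] H) (hM T hT) (hN T hT) z⟩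

theorem stmt1_general {H : Type*} [NormedAddCommGroup H] [InnerProductSpace ℂ H]
    (A : Subalgebra ℂ (H →L[ℂ] H)) (M N : Submodule ℂ H)
    (hM : ∀ T ∈ A, ∀ x ∈ M, T x ∈ M) (hN : ∀ T ∈ A, ∀ x ∈ N, T x ∈ N)
    (hMN : M ⊓ N = ⊥) (hdense : Dense ((M ⊔ N : Submodule ℂ H) : Set H))
    (hcl : ∃ x : H, x ≠ 0 ∧ x ∈ closure (M : Set H) ∧ x ∈ closure (N : Set H)) :
    ∃ X : H →ₗ.[ℂ] H, Dense (X.domain : Set H) ∧ Commutes (A : Set (H →L[ℂ] H)) X ∧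
      ¬ X.IsClosable := by
  obtain ⟨x, hx0, hxM, hxN⟩ := hcl
  have hdisj : Disjoint M N := disjoint_iff.mpr hMN
  exact ⟨projAlong hdisj, hdense, commutes_projAlong hdisj hM hN,
    not_isClosable_of_mem_closure_graph hx0 (zero_mem_closure_graph_projAlong hdisj hxM hxN)⟩

/-- If a unital algebra `A` admits invariant linear manifolds `M, N` with
`M ∩ N = {0}`, `M + N` dense, and `closure M ∩ closure N ≠ {0}`, then `A` fails the
closability property: some densely defined linear transformation commuting with `A`
is not closable. -/
theorem stmt1 {H : Type*} [NormedAddCommGroup H] [InnerProductSpace ℂ H] [CompleteSpace H]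
    (A : Subalgebra ℂ (H →L[ℂ] H)) (M N : Submodule ℂ H)
    (hM : ∀ T ∈ A, ∀ x ∈ M, T x ∈ M) (hN : ∀ T ∈ A, ∀ x ∈ N, T x ∈ N)
    (hMN : M ⊓ N = ⊥) (hdense : Dense ((M ⊔ N : Submodule ℂ H) : Set H))
    (hcl : ∃ x : H, x ≠ 0 ∧ x ∈ closure (M : Set H) ∧ x ∈ closure (N : Set H)) :
    ∃ X : H →ₗ.[ℂ] H, Dense (X.domain : Set H) ∧ Commutes (A : Set (H →L[ℂ] H)) X ∧
      ¬ X.IsClosable :=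
  stmt1_general A M N hM hN hMN hdense hcl
end

section
/- Every commutative unital algebra A of bounded operators on a Hilbert space which has a rationally strictly cyclic vector has the closability property: every densely defined linear transformation commuting with A is closable. -/
/-- `h₀` is a rationally strictly cyclic vector for the algebra `A`: for every `h` there
are `A₁, B ∈ A` with `B h = A₁ h₀` and `ker B = {0}`. -/
def RatStrictCyclic {H : Type*} [NormedAddCommGroup H] [InnerProductSpace ℂ H]
    (A : Subalgebra ℂ (H →L[ℂ] H)) (h₀ : H) : Prop :=
  ∀ h : H, ∃ A₁ ∈ A, ∃ B ∈ A, Function.Injective B ∧ B h = A₁ h₀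

/-- An algebra of operators is confluent if any two nonzero vectors can be matched by
injective operators from the algebra. -/
def ConfluentOn {H : Type*} [NormedAddCommGroup H] [InnerProductSpace ℂ H]
    (A : Set (H →L[ℂ] H)) : Prop :=
  ∀ h₁ h₂ : H, h₁ ≠ 0 → h₂ ≠ 0 →
    ∃ B₁ ∈ A, ∃ B₂ ∈ A, Function.Injective B₁ ∧ Function.Injective B₂ ∧ B₁ h₁ = B₂ h₂

/-- Every commutative unital algebra of bounded operators on a Hilbert
space with a rationally strictly cyclic vector has the closability property. -/
theorem stmt8 {H : Type*} [NormedAddCommGroup H] [InnerProductSpace ℂ H] [CompleteSpace H]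
    (A : Subalgebra ℂ (H →L[ℂ] H))
    (hcomm : ∀ T₁ ∈ A, ∀ T₂ ∈ A, T₁ * T₂ = T₂ * T₁)
    (h₀ : H) (hrsc : RatStrictCyclic A h₀) :
    ClosabilityProperty (A : Set (H →L[ℂ] H)) := by
  intro X hdense hX
  -- commuting elements of the algebra, applied to vectors
  have swap : ∀ T ∈ A, ∀ S ∈ A, ∀ v : H, T (S v) = S (T v) := by
    intro T hT S hS v
    have h := hcomm T hT S hS
    calc T (S v) = (T * S) v := rfl
      _ = (S * T) v := by rw [h]
      _ = S (T v) := rfl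
  -- Key identity: for f, g in the domain, with B₁ f = A₁ h₀ and B̂₁ (X f) = Â₁ h₀,
  -- we have A₁ (B̂₁ (X g)) = B₁ (Â₁ g).
  have key : ∀ (f : X.domain) (A₁ B₁ Ah Bh : H →L[ℂ] H),
      A₁ ∈ A → B₁ ∈ A → Ah ∈ A → Bh ∈ A →
      B₁ (f : H) = A₁ h₀ → Bh (X f) = Ah h₀ →
      ∀ g : X.domain, A₁ (Bh (X g)) = B₁ (Ah (g : H)) := by
    intro f A₁ B₁ Ah Bh hA₁ hB₁ hAh hBh hfp hXfp g
    obtain ⟨A₂, hA₂, B₂, hB₂, injB₂, hgp⟩ := hrsc (g : H)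
    apply injB₂
    obtain ⟨g₁, hg₁c, hg₁X⟩ := hX B₂ hB₂ g
    obtain ⟨g₂, hg₂c, hg₂X⟩ := hX A₁ hA₁ g₁
    obtain ⟨g₃, hg₃c, hg₃X⟩ := hX A₂ hA₂ f
    obtain ⟨g₄, hg₄c, hg₄X⟩ := hX B₁ hB₁ g₃
    have hcoe : (g₂ : H) = (g₄ : H) := by
      calc (g₂ : H) = A₁ (g₁ : H) := hg₂c
        _ = A₁ (B₂ (g : H)) := by rw [hg₁c]
        _ = A₁ (A₂ h₀) := by rw [hgp]
        _ = A₂ (A₁ h₀) := swap A₁ hA₁ A₂ hA₂ h₀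
        _ = A₂ (B₁ (f : H)) := by rw [hfp]
        _ = B₁ (A₂ (f : H)) := swap A₂ hA₂ B₁ hB₁ _
        _ = B₁ (g₃ : H) := by rw [hg₃c]
        _ = (g₄ : H) := hg₄c.symm
    have hXg : X g₂ = X g₄ := by rw [Subtype.ext hcoe]
    have L : B₂ (A₁ (Bh (X g))) = B₁ (Ah (A₂ h₀)) := by
      calc B₂ (A₁ (Bh (X g)))
          = A₁ (B₂ (Bh (X g))) := swap B₂ hB₂ A₁ hA₁ _
        _ = A₁ (Bh (B₂ (X g))) := by rw [swap B₂ hB₂ Bh hBh]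
        _ = A₁ (Bh (X g₁)) := by rw [hg₁X]
        _ = Bh (A₁ (X g₁)) := swap A₁ hA₁ Bh hBh _
        _ = Bh (X g₂) := by rw [hg₂X]
        _ = Bh (X g₄) := by rw [hXg]
        _ = Bh (B₁ (X g₃)) := by rw [hg₄X]
        _ = Bh (B₁ (A₂ (X f))) := by rw [hg₃X]
        _ = B₁ (Bh (A₂ (X f))) := swap Bh hBh B₁ hB₁ _
        _ = B₁ (A₂ (Bh (X f))) := by rw [swap Bh hBh A₂ hA₂]
        _ = B₁ (A₂ (Ah h₀)) := by rw [hXfp]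
        _ = B₁ (Ah (A₂ h₀)) := by rw [swap A₂ hA₂ Ah hAh]
    have R : B₂ (B₁ (Ah (g : H))) = B₁ (Ah (A₂ h₀)) := by
      calc B₂ (B₁ (Ah (g : H)))
          = B₁ (B₂ (Ah (g : H))) := swap B₂ hB₂ B₁ hB₁ _
        _ = B₁ (Ah (B₂ (g : H))) := by rw [swap B₂ hB₂ Ah hAh]
        _ = B₁ (Ah (A₂ h₀)) := by rw [hgp]
    exact L.trans R.symm
  -- the closure of the graph is itself a graph
  refine ⟨X.graph.topologicalClosure.toLinearPMap,
    (Submodule.toLinearPMap_graph_eq _ ?_).symm⟩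
  intro p hp hp1
  -- For every f in the domain with pair (A₁, B₁), we get A₁ p.2 = 0.
  have hA₁k : ∀ (f : X.domain) (A₁ B₁ : H →L[ℂ] H), A₁ ∈ A → B₁ ∈ A →
      Function.Injective B₁ → B₁ (f : H) = A₁ h₀ → A₁ p.2 = 0 := by
    intro f A₁ B₁ hA₁ hB₁ injB₁ hfp
    obtain ⟨Ah, hAh, Bh, hBh, injBh, hXfp⟩ := hrsc (X f)
    have hkey := key f A₁ B₁ Ah Bh hA₁ hB₁ hAh hBh hfp hXfp
    have hclosed : IsClosed {q : H × H | A₁ (Bh q.2) = B₁ (Ah q.1)} :=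
      isClosed_eq ((A₁.continuous.comp Bh.continuous).comp continuous_snd)
        ((B₁.continuous.comp Ah.continuous).comp continuous_fst)
    have hsub : (X.graph : Set (H × H)) ⊆ {q : H × H | A₁ (Bh q.2) = B₁ (Ah q.1)} := by
      intro q hq
      rw [SetLike.mem_coe, LinearPMap.mem_graph_iff] at hq
      obtain ⟨y, hy1, hy2⟩ := hq
      show A₁ (Bh q.2) = B₁ (Ah q.1)
      rw [← hy1, ← hy2]
      exact hkey y
    have hp' : p ∈ closure (X.graph : Set (H × H)) := by
      rw [← Submodule.topologicalClosure_coe]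
      exact hp
    have hC : A₁ (Bh p.2) = B₁ (Ah p.1) := closure_minimal hsub hclosed hp'
    rw [hp1, map_zero, map_zero] at hC
    apply injBh
    rw [map_zero, swap Bh hBh A₁ hA₁ p.2]
    exact hC
  -- now use the pair for p.2 itself
  obtain ⟨Ak, hAk, Bk, hBk, injBk, hBkk⟩ := hrsc p.2
  have hAf : ∀ f : X.domain, Ak (f : H) = 0 := by
    intro f
    obtain ⟨A₁, hA₁, B₁, hB₁, injB₁, hfp⟩ := hrsc (f : H)
    have hk0 : A₁ p.2 = 0 := hA₁k f A₁ B₁ hA₁ hB₁ injB₁ hfp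
    apply injB₁
    rw [map_zero]
    calc B₁ (Ak (f : H)) = Ak (B₁ (f : H)) := swap B₁ hB₁ Ak hAk _
      _ = Ak (A₁ h₀) := by rw [hfp]
      _ = A₁ (Ak h₀) := swap Ak hAk A₁ hA₁ h₀
      _ = A₁ (Bk p.2) := by rw [hBkk]
      _ = Bk (A₁ p.2) := swap A₁ hA₁ Bk hBk _
      _ = 0 := by rw [hk0, map_zero]
  have hAh₀ : Ak h₀ = 0 := by
    have hclosed : IsClosed {x : H | Ak x = 0} :=
      isClosed_eq Ak.continuous continuous_const
    have hsub : (X.domain : Set H) ⊆ {x : H | Ak x = 0} := by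
      intro x hx
      exact hAf ⟨x, hx⟩
    have h1 : closure (X.domain : Set H) ⊆ {x : H | Ak x = 0} :=
      closure_minimal hsub hclosed
    exact h1 (by rw [hdense.closure_eq]; trivial)
  apply injBk
  rw [map_zero, hBkk, hAh₀]
end

section
/- Let A be a commutative unital algebra of bounded operators with a rationally strictly cyclic vector h₀, and let X be a densely defined linear transformation commuting with A such that h₀ ∈ D(X). Then there exist A₁, B ∈ A with ker B = {0} such that B X h = A₁ h for all h ∈ D(X); in particular, if X is bounded and everywhere defined then X = B⁻¹A₁ and the commutant A' is commutative. -/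

lemma aux_key {H : Type*} [NormedAddCommGroup H] [InnerProductSpace ℂ H]
    (A : Subalgebra ℂ (H →L[ℂ] H))
    (hcomm : ∀ T₁ ∈ A, ∀ T₂ ∈ A, T₁ * T₂ = T₂ * T₁)
    (h₀ : H) (hrsc : RatStrictCyclic A h₀)
    (X : H →ₗ.[ℂ] H)
    (hX : Commutes (A : Set (H →L[ℂ] H)) X) (hh₀ : h₀ ∈ X.domain) :
    ∃ A₁ ∈ A, ∃ B ∈ A, Function.Injective B ∧
      ∀ h : X.domain, B (X h) = A₁ (h : H) := by
  set x₀ := X ⟨h₀, hh₀⟩ with hx₀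
  obtain ⟨A₁, hA₁, B, hB, hBinj, hBx⟩ := hrsc x₀
  refine ⟨A₁, hA₁, B, hB, hBinj, fun h => ?_⟩
  obtain ⟨Ah, hAh, Bh, hBh, hBhinj, hBhh⟩ := hrsc (h : H)
  apply hBhinj
  obtain ⟨h', hh'1, hh'2⟩ := hX Bh hBh h
  obtain ⟨h₀', hh₀'1, hh₀'2⟩ := hX Ah hAh ⟨h₀, hh₀⟩
  have hsub : h' = h₀' := Subtype.ext (by rw [hh'1, hh₀'1, hBhh])
  have key : Bh (X h) = Ah x₀ := by rw [← hh'2, hsub, hh₀'2]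
  have hc : ∀ T₁ ∈ A, ∀ T₂ ∈ A, ∀ x : H, T₁ (T₂ x) = T₂ (T₁ x) := by
    intro T₁ h₁ T₂ h₂ x
    have := hcomm T₁ h₁ T₂ h₂
    calc T₁ (T₂ x) = (T₁ * T₂) x := (ContinuousLinearMap.mul_apply _ _ _).symm
      _ = (T₂ * T₁) x := by rw [this]
      _ = T₂ (T₁ x) := ContinuousLinearMap.mul_apply _ _ _
  calc Bh (B (X h)) = B (Bh (X h)) := hc Bh hBh B hB _
    _ = B (Ah x₀) := by rw [key]
    _ = Ah (B x₀) := hc B hB Ah hAh _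
    _ = Ah (A₁ h₀) := by rw [hBx]
    _ = A₁ (Ah h₀) := hc Ah hAh A₁ hA₁ _
    _ = A₁ (Bh h) := by rw [hBhh]
    _ = Bh (A₁ h) := hc A₁ hA₁ Bh hBh _

lemma aux_bounded {H : Type*} [NormedAddCommGroup H] [InnerProductSpace ℂ H]
    (A : Subalgebra ℂ (H →L[ℂ] H))
    (hcomm : ∀ T₁ ∈ A, ∀ T₂ ∈ A, T₁ * T₂ = T₂ * T₁)
    (h₀ : H) (hrsc : RatStrictCyclic A h₀)
    (Y : H →L[ℂ] H) (hY : ∀ T ∈ A, Y * T = T * Y) :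
    ∃ A₁ ∈ A, ∃ B ∈ A, Function.Injective B ∧ B * Y = A₁ := by
  set X : H →ₗ.[ℂ] H := (Y : H →ₗ[ℂ] H).toPMap ⊤ with hXdef
  have hXap : ∀ h : X.domain, X h = Y (h : H) := fun h => rfl
  have hXcomm : Commutes (A : Set (H →L[ℂ] H)) X := by
    intro T hT h
    refine ⟨⟨T h, trivial⟩, rfl, ?_⟩
    rw [hXap, hXap]
    calc Y (T h) = (Y * T) (h : H) := (ContinuousLinearMap.mul_apply _ _ _).symm
      _ = (T * Y) (h : H) := by rw [hY T hT]
      _ = T (Y h) := ContinuousLinearMap.mul_apply _ _ _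
  obtain ⟨A₁, hA₁, B, hB, hBinj, hkey⟩ :=
    aux_key A hcomm h₀ hrsc X hXcomm trivial
  refine ⟨A₁, hA₁, B, hB, hBinj, ?_⟩
  ext x
  have := hkey ⟨x, trivial⟩
  rw [hXap] at this
  simpa [ContinuousLinearMap.mul_apply] using this

/-- Let A be a commutative unital algebra with a rationally strictly cyclic
vector h₀, and X a densely defined linear transformation commuting with A with
h₀ ∈ D(X). Then there are A₁, B ∈ A with ker B = {0} and B X h = A₁ h on D(X)
(i.e. X ⊆ B⁻¹A₁). In particular every bounded everywhere-defined operator Y commuting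
with A satisfies B ∘ Y = A₁ for such a pair (so Y = B⁻¹A₁), and the commutant A' is
commutative. -/
theorem stmt9 {H : Type*} [NormedAddCommGroup H] [InnerProductSpace ℂ H] [CompleteSpace H]
    (A : Subalgebra ℂ (H →L[ℂ] H))
    (hcomm : ∀ T₁ ∈ A, ∀ T₂ ∈ A, T₁ * T₂ = T₂ * T₁)
    (h₀ : H) (hrsc : RatStrictCyclic A h₀)
    (X : H →ₗ.[ℂ] H) (hdense : Dense (X.domain : Set H))
    (hX : Commutes (A : Set (H →L[ℂ] H)) X) (hh₀ : h₀ ∈ X.domain) :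
    (∃ A₁ ∈ A, ∃ B ∈ A, Function.Injective B ∧
        ∀ h : X.domain, B (X h) = A₁ (h : H)) ∧
    (∀ Y : H →L[ℂ] H, (∀ T ∈ A, Y * T = T * Y) →
        ∃ A₁ ∈ A, ∃ B ∈ A, Function.Injective B ∧ B * Y = A₁) ∧
    (∀ Y₁ Y₂ : H →L[ℂ] H, (∀ T ∈ A, Y₁ * T = T * Y₁) → (∀ T ∈ A, Y₂ * T = T * Y₂) →
        Y₁ * Y₂ = Y₂ * Y₁) := by
  have hc : ∀ T₁ ∈ A, ∀ T₂ ∈ A, ∀ x : H, T₁ (T₂ x) = T₂ (T₁ x) := by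
    intro T₁ h₁ T₂ h₂ x
    have := hcomm T₁ h₁ T₂ h₂
    calc T₁ (T₂ x) = (T₁ * T₂) x := (ContinuousLinearMap.mul_apply _ _ _).symm
      _ = (T₂ * T₁) x := by rw [this]
      _ = T₂ (T₁ x) := ContinuousLinearMap.mul_apply _ _ _
  refine ⟨aux_key A hcomm h₀ hrsc X hX hh₀,
    fun Y hY => aux_bounded A hcomm h₀ hrsc Y hY, ?_⟩
  intro Y₁ Y₂ hY₁ hY₂
  obtain ⟨A₁, hA₁, B₁, hB₁, hB₁inj, hk₁⟩ := aux_bounded A hcomm h₀ hrsc Y₁ hY₁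
  obtain ⟨A₂, hA₂, B₂, hB₂, hB₂inj, hk₂⟩ := aux_bounded A hcomm h₀ hrsc Y₂ hY₂
  ext x
  apply hB₁inj
  apply hB₂inj
  have e₁ : ∀ z, B₁ (Y₁ z) = A₁ z := fun z => by
    simpa [ContinuousLinearMap.mul_apply] using congrFun (congrArg (⇑) hk₁) z
  have e₂ : ∀ z, B₂ (Y₂ z) = A₂ z := fun z => by
    simpa [ContinuousLinearMap.mul_apply] using congrFun (congrArg (⇑) hk₂) z
  have comY₁ : ∀ T ∈ A, ∀ z : H, Y₁ (T z) = T (Y₁ z) := by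
    intro T hT z
    calc Y₁ (T z) = (Y₁ * T) z := (ContinuousLinearMap.mul_apply _ _ _).symm
      _ = (T * Y₁) z := by rw [hY₁ T hT]
      _ = T (Y₁ z) := ContinuousLinearMap.mul_apply _ _ _
  have comY₂ : ∀ T ∈ A, ∀ z : H, Y₂ (T z) = T (Y₂ z) := by
    intro T hT z
    calc Y₂ (T z) = (Y₂ * T) z := (ContinuousLinearMap.mul_apply _ _ _).symm
      _ = (T * Y₂) z := by rw [hY₂ T hT]
      _ = T (Y₂ z) := ContinuousLinearMap.mul_apply _ _ _
  have lhs : B₂ (B₁ ((Y₁ * Y₂) x)) = A₁ (A₂ x) := by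
    calc B₂ (B₁ (Y₁ (Y₂ x))) = B₁ (B₂ (Y₁ (Y₂ x))) := hc B₂ hB₂ B₁ hB₁ _
      _ = B₁ (Y₁ (B₂ (Y₂ x))) := by rw [comY₁ B₂ hB₂]
      _ = B₁ (Y₁ (A₂ x)) := by rw [e₂]
      _ = A₁ (A₂ x) := e₁ _
  have rhs : B₂ (B₁ ((Y₂ * Y₁) x)) = A₁ (A₂ x) := by
    calc B₂ (B₁ (Y₂ (Y₁ x))) = B₂ (Y₂ (B₁ (Y₁ x))) := by rw [comY₂ B₁ hB₁]
      _ = B₂ (Y₂ (A₁ x)) := by rw [e₁]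
      _ = A₂ (A₁ x) := e₂ _
      _ = A₁ (A₂ x) := hc A₂ hA₂ A₁ hA₁ _
  simp only [ContinuousLinearMap.mul_apply]
  rw [show B₂ (B₁ (Y₁ (Y₂ x))) = A₁ (A₂ x) from lhs,
    show B₂ (B₁ (Y₂ (Y₁ x))) = A₁ (A₂ x) from rhs]
end

section
/- A direct sum algebra A = ⊕_{i∈I} A_i acting on ⊕_{i∈I} H_i has the closability property if and only if every summand A_i has the closability property. -/
/-! Each summand is a corner of the direct sum: with `Jᵢ` the inclusion of `Hᵢ` and `Pᵢ` the
coordinate projection, `Pᵢ Jᵢ = 1` and `Jᵢ T Pᵢ ∈ ⊕ Aⱼ` for `T ∈ Aᵢ`. A transformation `X` commuting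
with `⊕ Aⱼ` commutes with `Jᵢ Pᵢ`, so its compression `Pᵢ X Jᵢ` is densely defined, commutes with
`Aᵢ`, and `Pᵢ × Pᵢ` maps the graph of `X` into the graph of the compression. If every compression
is closable, a point `(0, y)` of the closure of the graph of `X` thus has `Pᵢ y = 0` for all `i`.
Conversely, `X₀` commuting with `Aᵢ` yields `Jᵢ X₀ Pᵢ` on `Pᵢ⁻¹(dom X₀)`, which commutes with
`⊕ Aⱼ` since its members act diagonally, and `Jᵢ × Jᵢ` maps the graph of `X₀` into its graph. -/

open Set

namespace LinearPMap

section Algebra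

variable {R E E' F F' : Type*} [CommRing R] [AddCommGroup E] [AddCommGroup E'] [AddCommGroup F]
  [AddCommGroup F'] [Module R E] [Module R E'] [Module R F] [Module R F']

def compress (X : E →ₗ.[R] E') (J : F →ₗ[R] E) (P : E' →ₗ[R] F') : F →ₗ.[R] F' where
  domain := X.domain.comap J
  toFun := P ∘ₗ X.toFun ∘ₗ J.restrict fun _ hw => hw

theorem mem_graph_compress_iff {X : E →ₗ.[R] E'} {J : F →ₗ[R] E} {P : E' →ₗ[R] F'}
    {w : F} {v : F'} : (w, v) ∈ (X.compress J P).graph ↔ ∃ u, (J w, u) ∈ X.graph ∧ P u = v := by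
  simp only [mem_graph_iff]
  constructor
  · rintro ⟨⟨w', hw'⟩, rfl, rfl⟩
    exact ⟨X ⟨J w', hw'⟩, ⟨⟨J w', hw'⟩, rfl, rfl⟩, rfl⟩
  · rintro ⟨u, ⟨y, hy, rfl⟩, rfl⟩
    have hw : J w ∈ X.domain := hy ▸ y.2
    obtain rfl : y = ⟨J w, hw⟩ := Subtype.ext hy
    exact ⟨⟨w, hw⟩, rfl, rfl⟩

theorem mapsTo_graph_compress_of_leftInverse (X : F →ₗ.[R] F') {J : F →ₗ[R] E} {P : E →ₗ[R] F}
    (hPJ : Function.LeftInverse P J) (J' : F' →ₗ[R] E') :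
    MapsTo (Prod.map J J') X.graph (X.compress P J').graph :=
  fun ⟨w, v⟩ hwv => mem_graph_compress_iff.2 ⟨v, by simpa [hPJ w] using hwv, rfl⟩

theorem mapsTo_domain_of_mapsTo_graph {X : E →ₗ.[R] E'} {Y : F →ₗ.[R] F'} {f : E → F}
    {g : E' → F'} (h : MapsTo (Prod.map f g) X.graph Y.graph) : MapsTo f X.domain Y.domain :=
  fun _ hx =>
    have ⟨y, hxy⟩ := mem_domain_iff.1 hx
    mem_domain_iff.2 ⟨g y, h hxy⟩

end Algebra

section Topology

variable {R E E' F F' : Type*} [CommRing R] [TopologicalSpace R]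
  [AddCommGroup E] [AddCommGroup E'] [AddCommGroup F] [AddCommGroup F']
  [Module R E] [Module R E'] [Module R F] [Module R F']
  [TopologicalSpace E] [TopologicalSpace E'] [TopologicalSpace F] [TopologicalSpace F']
  [ContinuousAdd E] [ContinuousAdd E'] [ContinuousSMul R E] [ContinuousSMul R E']

theorem isClosable_iff_forall_mem_closure_graph {X : E →ₗ.[R] E'} :
    X.IsClosable ↔ ∀ y, ((0 : E), y) ∈ _root_.closure (X.graph : Set (E × E')) → y = 0 := by
  rw [← Submodule.topologicalClosure_coe]
  constructor
  · rintro ⟨X', hX'⟩ y hy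
    rw [hX'] at hy
    exact X'.graph_fst_eq_zero_snd hy rfl
  · intro h
    refine ⟨_, (Submodule.toLinearPMap_graph_eq _ ?_).symm⟩
    rintro ⟨x, y⟩ hxy (rfl : x = 0)
    exact h y hxy

theorem IsClosable.map_eq_zero_of_mapsTo_graph {Y : E →ₗ.[R] E'} (hY : Y.IsClosable)
    {X : F →ₗ.[R] F'} {f : F →L[R] E} {g : F' →L[R] E'}
    (h : MapsTo (Prod.map f g) X.graph Y.graph) {y : F'}
    (hy : ((0 : F), y) ∈ _root_.closure (X.graph : Set (F × F'))) : g y = 0 := by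
  have hmem := map_mem_closure (f.continuous.prodMap g.continuous) hy h
  rw [Prod.map_apply, f.map_zero] at hmem
  exact isClosable_iff_forall_mem_closure_graph.1 hY _ hmem

end Topology

end LinearPMap

theorem ContinuousLinearMap.isOpenMap_of_leftInverse {R M N : Type*} [Ring R]
    [AddCommGroup M] [AddCommGroup N] [Module R M] [Module R N]
    [TopologicalSpace M] [TopologicalSpace N] [ContinuousAdd M] [ContinuousSub N]
    {P : M →L[R] N} {J : N →L[R] M} (hPJ : Function.LeftInverse P J) : IsOpenMap P :=
  IsOpenMap.of_sections fun x =>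
    ⟨fun d => x + J (d - P x), by fun_prop, by simp,
      fun d => by rw [map_add, hPJ (d - P x), add_sub_cancel]⟩

theorem commutes_iff_mapsTo_graph {H : Type*} [NormedAddCommGroup H] [InnerProductSpace ℂ H]
    {A : Set (H →L[ℂ] H)} {X : H →ₗ.[ℂ] H} :
    Commutes A X ↔ ∀ T ∈ A, MapsTo (Prod.map T T) X.graph X.graph := by
  refine ⟨fun hX T hT ⟨x, y⟩ hxy => ?_, fun hX T hT x => ?_⟩
  · obtain ⟨x, rfl, rfl⟩ := (X.mem_graph_iff).1 hxy
    obtain ⟨x', hx', hXx'⟩ := hX T hT x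
    exact (X.mem_graph_iff).2 ⟨x', hx', hXx'⟩
  · exact (X.mem_graph_iff).1 (hX T hT (X.mem_graph x))

section Corner

variable {E F : Type*} [NormedAddCommGroup E] [InnerProductSpace ℂ E]
  [NormedAddCommGroup F] [InnerProductSpace ℂ F] {A : Set (E →L[ℂ] E)} {B : Set (F →L[ℂ] F)}
  {J : F →L[ℂ] E} {P : E →L[ℂ] F}

theorem Commutes.mapsTo_graph_compress (hPJ : Function.LeftInverse P J) {X : E →ₗ.[ℂ] E}
    (hX : Commutes A X) (hJP : J ∘L P ∈ A) :
    MapsTo (Prod.map P P) X.graph (X.compress J.toLinearMap P.toLinearMap).graph := by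
  rintro ⟨x, y⟩ hxy
  refine LinearPMap.mem_graph_compress_iff.2 ⟨J (P y), ?_, hPJ (P y)⟩
  exact commutes_iff_mapsTo_graph.1 hX _ hJP hxy

theorem Commutes.dense_domain_compress (hPJ : Function.LeftInverse P J) {X : E →ₗ.[ℂ] E}
    (hX : Commutes A X) (hJP : J ∘L P ∈ A) (hdense : Dense (X.domain : Set E)) :
    Dense ((X.compress J.toLinearMap P.toLinearMap).domain : Set F) :=
  (hPJ.surjective.denseRange.dense_image P.continuous hdense).mono <|
    (LinearPMap.mapsTo_domain_of_mapsTo_graph (hX.mapsTo_graph_compress hPJ hJP)).image_subset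

theorem Commutes.compress (hPJ : Function.LeftInverse P J) {X : E →ₗ.[ℂ] E}
    (hX : Commutes A X) (hJTP : ∀ T ∈ B, J ∘L T ∘L P ∈ A) :
    Commutes B (X.compress J.toLinearMap P.toLinearMap) := by
  refine commutes_iff_mapsTo_graph.2 fun T hT ⟨w, v⟩ hwv => ?_
  obtain ⟨u, hu, rfl⟩ := LinearPMap.mem_graph_compress_iff.1 hwv
  refine LinearPMap.mem_graph_compress_iff.2 ⟨J (T (P u)), ?_, by simp [hPJ (T (P u))]⟩
  simpa [hPJ w] using commutes_iff_mapsTo_graph.1 hX _ (hJTP T hT) hu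

theorem Commutes.compress_of_intertwining {X : F →ₗ.[ℂ] F} (hX : Commutes B X)
    (hA : ∀ T ∈ A, ∃ T' ∈ B, P ∘L T = T' ∘L P ∧ T ∘L J = J ∘L T') :
    Commutes A (X.compress P.toLinearMap J.toLinearMap) := by
  refine commutes_iff_mapsTo_graph.2 fun T hT ⟨x, y⟩ hxy => ?_
  obtain ⟨T', hT', hPT, hTJ⟩ := hA T hT
  obtain ⟨u, hu, rfl⟩ := LinearPMap.mem_graph_compress_iff.1 hxy
  refine LinearPMap.mem_graph_compress_iff.2 ⟨T' u, ?_, ?_⟩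
  · simpa [← ContinuousLinearMap.comp_apply, hPT] using commutes_iff_mapsTo_graph.1 hX _ hT' hu
  · simp [← ContinuousLinearMap.comp_apply, hTJ]

theorem ClosabilityProperty.of_corner (hPJ : Function.LeftInverse P J)
    (hA : ∀ T ∈ A, ∃ T' ∈ B, P ∘L T = T' ∘L P ∧ T ∘L J = J ∘L T')
    (hAcl : ClosabilityProperty A) : ClosabilityProperty B := by
  refine fun X hdense hX => LinearPMap.isClosable_iff_forall_mem_closure_graph.2 fun y hy => ?_
  have hdense' : Dense ((X.compress P.toLinearMap J.toLinearMap).domain : Set E) :=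
    hdense.preimage (ContinuousLinearMap.isOpenMap_of_leftInverse hPJ)
  have hJy := (hAcl _ hdense' (hX.compress_of_intertwining hA)).map_eq_zero_of_mapsTo_graph
    (X.mapsTo_graph_compress_of_leftInverse hPJ J.toLinearMap) hy
  simpa [hPJ y] using congrArg P hJy

end Corner

theorem ClosabilityProperty.of_corners {E : Type*} [NormedAddCommGroup E]
    [InnerProductSpace ℂ E] {A : Set (E →L[ℂ] E)} {ι : Type*} {F : ι → Type*}
    [∀ i, NormedAddCommGroup (F i)] [∀ i, InnerProductSpace ℂ (F i)]
    {B : ∀ i, Set (F i →L[ℂ] F i)} {J : ∀ i, F i →L[ℂ] E} {P : ∀ i, E →L[ℂ] F i}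
    (hPJ : ∀ i, Function.LeftInverse (P i) (J i)) (hsep : ∀ x, (∀ i, P i x = 0) → x = 0)
    (hJP : ∀ i, J i ∘L P i ∈ A) (hJTP : ∀ i, ∀ T ∈ B i, J i ∘L T ∘L P i ∈ A)
    (hB : ∀ i, ClosabilityProperty (B i)) : ClosabilityProperty A := by
  refine fun X hdense hX => LinearPMap.isClosable_iff_forall_mem_closure_graph.2 fun y hy => ?_
  refine hsep y fun i => ?_
  have hXi := hB i _ (hX.dense_domain_compress (hPJ i) (hJP i) hdense)
    (hX.compress (hPJ i) (hJTP i))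
  exact hXi.map_eq_zero_of_mapsTo_graph (hX.mapsTo_graph_compress (hPJ i) (hJP i)) hy

section DirectSum

variable {I : Type*} {Hi : I → Type*} [∀ i, NormedAddCommGroup (Hi i)]
  [∀ i, InnerProductSpace ℂ (Hi i)]

def lpDirectSum (Ai : ∀ i, Set (Hi i →L[ℂ] Hi i)) : Set (lp Hi 2 →L[ℂ] lp Hi 2) :=
  {T | ∃ Ti : ∀ i, Hi i →L[ℂ] Hi i, (∀ i, Ti i ∈ Ai i) ∧ BddAbove (Set.range fun i => ‖Ti i‖) ∧
    ∀ x : lp Hi 2, ∀ i, (T x) i = Ti i (x i)}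

variable [DecidableEq I]

theorem lp.leftInverse_evalCLM_singleContinuousLinearMap (i : I) :
    Function.LeftInverse (lp.evalCLM ℂ Hi 2 i) (lp.singleContinuousLinearMap ℂ Hi 2 i) :=
  lp.single_apply_self 2 i

theorem single_comp_comp_evalCLM_mem_lpDirectSum {Ai : ∀ i, Set (Hi i →L[ℂ] Hi i)}
    (hAi : ∀ i, 0 ∈ Ai i) {i : I} {T : Hi i →L[ℂ] Hi i} (hT : T ∈ Ai i) :
    lp.singleContinuousLinearMap ℂ Hi 2 i ∘L T ∘L lp.evalCLM ℂ Hi 2 i ∈ lpDirectSum Ai := by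
  refine ⟨Pi.single i T, fun j => ?_, ⟨‖T‖, ?_⟩, fun x j => ?_⟩
  · rcases eq_or_ne j i with rfl | hj
    · simpa using hT
    · simpa [hj] using hAi j
  · rintro _ ⟨j, rfl⟩
    rcases eq_or_ne j i with rfl | hj
    · simp
    · simp [hj]
  · exact (Pi.apply_single (fun j (S : Hi j →L[ℂ] Hi j) => S (x j)) (fun _ => rfl) i T j).symm

theorem exists_intertwining_of_mem_lpDirectSum {Ai : ∀ i, Set (Hi i →L[ℂ] Hi i)}
    {T : lp Hi 2 →L[ℂ] lp Hi 2} (hT : T ∈ lpDirectSum Ai) (i : I) :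
    ∃ T' ∈ Ai i, lp.evalCLM ℂ Hi 2 i ∘L T = T' ∘L lp.evalCLM ℂ Hi 2 i ∧
      T ∘L lp.singleContinuousLinearMap ℂ Hi 2 i = lp.singleContinuousLinearMap ℂ Hi 2 i ∘L T' := by
  obtain ⟨Ti, hTi, -, hT⟩ := hT
  refine ⟨Ti i, hTi i, ContinuousLinearMap.ext fun x => hT x i,
    ContinuousLinearMap.ext fun w => lp.ext <| funext fun j => ?_⟩
  simp only [ContinuousLinearMap.comp_apply, lp.singleContinuousLinearMap_apply, hT,
    lp.single_apply]
  exact Pi.apply_single (fun j => Ti j) (fun _ => map_zero _) i w j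

end DirectSum

theorem stmt11_general {I : Type*} (Hi : I → Type*) [∀ i, NormedAddCommGroup (Hi i)]
    [∀ i, InnerProductSpace ℂ (Hi i)]
    (Ai : ∀ i, Subalgebra ℂ (Hi i →L[ℂ] Hi i)) :
    ClosabilityProperty
      {T : lp (fun i => Hi i) 2 →L[ℂ] lp (fun i => Hi i) 2 |
        ∃ Ti : ∀ i, Hi i →L[ℂ] Hi i,
          (∀ i, Ti i ∈ Ai i) ∧ BddAbove (Set.range fun i => ‖Ti i‖) ∧
          ∀ x : lp (fun i => Hi i) 2, ∀ i, (T x) i = Ti i (x i)} ↔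
    ∀ i, ClosabilityProperty ((Ai i : Set (Hi i →L[ℂ] Hi i))) := by
  classical
  change ClosabilityProperty (lpDirectSum (Hi := Hi) fun i => Ai i) ↔ _
  refine ⟨fun h i => h.of_corner (lp.leftInverse_evalCLM_singleContinuousLinearMap i)
    fun T hT => exists_intertwining_of_mem_lpDirectSum hT i, fun h => ?_⟩
  have hmem {i} {T} (hT : T ∈ Ai i) := single_comp_comp_evalCLM_mem_lpDirectSum (Hi := Hi)
    (fun i => (Ai i).zero_mem) hT
  refine .of_corners lp.leftInverse_evalCLM_singleContinuousLinearMap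
    (fun x hx => lp.ext (funext hx)) (fun i => ?_) (fun i T => hmem) h
  simpa only [ContinuousLinearMap.one_def, ContinuousLinearMap.id_comp] using hmem (Ai i).one_mem

/-- The direct sum ⊕ᵢ Aᵢ, consisting of the bounded operators on the
Hilbert space direct sum ⊕ᵢ Hᵢ acting componentwise through members Tᵢ ∈ Aᵢ with
uniformly bounded norms, has the closability property iff each Aᵢ does. -/
theorem stmt11 {I : Type*} (Hi : I → Type*) [∀ i, NormedAddCommGroup (Hi i)]
    [∀ i, InnerProductSpace ℂ (Hi i)] [∀ i, CompleteSpace (Hi i)]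
    (Ai : ∀ i, Subalgebra ℂ (Hi i →L[ℂ] Hi i)) :
    ClosabilityProperty
      {T : lp (fun i => Hi i) 2 →L[ℂ] lp (fun i => Hi i) 2 |
        ∃ Ti : ∀ i, Hi i →L[ℂ] Hi i,
          (∀ i, Ti i ∈ Ai i) ∧ BddAbove (Set.range fun i => ‖Ti i‖) ∧
          ∀ x : lp (fun i => Hi i) 2, ∀ i, (T x) i = Ti i (x i)} ↔
    ∀ i, ClosabilityProperty ((Ai i : Set (Hi i →L[ℂ] Hi i))) :=
  stmt11_general Hi Ai
end

section
/- Suppose A₁ ⊆ L(H₁) and A₂ ⊆ L(H₂) are unital algebras and there is a quasiaffinity Q : H₁ → H₂ (injective bounded operator with dense range) such that for every T₂ ∈ A₂ there exists T₁ ∈ A₁ with Q T₁ = T₂ Q. If A₂ has the closability property, then A₁ has the closability property. -/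
/-- If Q : H₁ → H₂ is a quasiaffinity (injective bounded operator with
dense range) such that every T₂ ∈ A₂ satisfies Q T₁ = T₂ Q for some T₁ ∈ A₁, and A₂
has the closability property, then so does A₁. -/
theorem stmt12 {H₁ H₂ : Type*} [NormedAddCommGroup H₁] [InnerProductSpace ℂ H₁]
    [CompleteSpace H₁] [NormedAddCommGroup H₂] [InnerProductSpace ℂ H₂] [CompleteSpace H₂]
    (A₁ : Subalgebra ℂ (H₁ →L[ℂ] H₁)) (A₂ : Subalgebra ℂ (H₂ →L[ℂ] H₂))
    (Q : H₁ →L[ℂ] H₂) (hQinj : Function.Injective Q) (hQdr : DenseRange Q)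
    (hint : ∀ T₂ ∈ A₂, ∃ T₁ ∈ A₁, Q.comp T₁ = T₂.comp Q)
    (hA₂ : ClosabilityProperty (A₂ : Set (H₂ →L[ℂ] H₂))) :
    ClosabilityProperty (A₁ : Set (H₁ →L[ℂ] H₁)) := by
  intro X hXdense hXcomm
  -- the image of the graph of X under Q × Q
  set QP : (H₁ × H₁) →ₗ[ℂ] (H₂ × H₂) :=
    (Q : H₁ →ₗ[ℂ] H₂).prodMap (Q : H₁ →ₗ[ℂ] H₂) with hQP
  set G₂ : Submodule ℂ (H₂ × H₂) := X.graph.map QP with hG₂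
  have hmem : ∀ {p : H₂ × H₂}, p ∈ G₂ ↔
      ∃ h : X.domain, Q (h : H₁) = p.1 ∧ Q (X h) = p.2 := by
    intro p
    constructor
    · rintro ⟨q, hq, rfl⟩
      rw [SetLike.mem_coe, LinearPMap.mem_graph_iff] at hq
      obtain ⟨h, h1, h2⟩ := hq
      exact ⟨h, by simp [hQP, ← h1, ← h2]⟩
    · rintro ⟨h, h1, h2⟩
      refine ⟨((h : H₁), X h), X.mem_graph h, ?_⟩
      simp [hQP, h1, h2, Prod.ext_iff]
  have hG₂graph : ∀ x ∈ G₂, x.1 = (0 : H₂) → x.2 = (0 : H₂) := by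
    rintro x hx hx1
    obtain ⟨h, h1, h2⟩ := hmem.mp hx
    have : (h : H₁) = 0 := hQinj (by rw [h1, hx1]; simp)
    have hh0 : h = 0 := Subtype.ext this
    rw [← h2, hh0]; simp
  set Y : H₂ →ₗ.[ℂ] H₂ := G₂.toLinearPMap with hY
  have hYgraph : Y.graph = G₂ := G₂.toLinearPMap_graph_eq hG₂graph
  have hmemY : ∀ {p : H₂ × H₂}, p ∈ Y.graph ↔
      ∃ h : X.domain, Q (h : H₁) = p.1 ∧ Q (X h) = p.2 := by
    intro p; rw [hYgraph]; exact hmem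
  -- Y is densely defined
  have hYdense : Dense (Y.domain : Set H₂) := by
    have h1 : (Q '' (X.domain : Set H₁)) ⊆ (Y.domain : Set H₂) := by
      rintro y ⟨h, hh, rfl⟩
      have : ((Q h : H₂), Q (X ⟨h, hh⟩)) ∈ Y.graph := hmemY.mpr ⟨⟨h, hh⟩, rfl, rfl⟩
      exact LinearPMap.mem_domain_of_mem_graph this
    exact (hQdr.dense_image Q.continuous hXdense).mono h1
  -- Y commutes with A₂
  have hYcomm : Commutes (A₂ : Set (H₂ →L[ℂ] H₂)) Y := by
    intro T₂ hT₂ y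
    obtain ⟨h, h1, h2⟩ := hmemY.mp (Y.mem_graph y)
    have h1' : Q (h : H₁) = (y : H₂) := h1
    have h2' : Q (X h) = Y y := h2
    obtain ⟨T₁, hT₁, hQT⟩ := hint T₂ hT₂
    obtain ⟨h', hh'1, hh'2⟩ := hXcomm T₁ hT₁ h
    have key : ((T₂ (y : H₂)), T₂ (Y y)) ∈ Y.graph := by
      refine hmemY.mpr ⟨h', ?_, ?_⟩
      · show Q (h' : H₁) = T₂ (y : H₂)
        rw [hh'1, ← h1']
        exact (congrFun (congrArg DFunLike.coe hQT) (h : H₁))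
      · show Q (X h') = T₂ (Y y)
        rw [hh'2, ← h2']
        exact (congrFun (congrArg DFunLike.coe hQT) (X h : H₁))
    have hd : T₂ (y : H₂) ∈ Y.domain := LinearPMap.mem_domain_of_mem_graph key
    refine ⟨⟨T₂ (y : H₂), hd⟩, rfl, ?_⟩
    exact Y.mem_graph_snd_inj key (Y.mem_graph ⟨T₂ (y : H₂), hd⟩) rfl |>.symm
  have hYclosable : Y.IsClosable := hA₂ Y hYdense hYcomm
  obtain ⟨Y', hY'⟩ := hYclosable
  -- now show X is closable
  refine ⟨X.graph.topologicalClosure.toLinearPMap,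
    (Submodule.toLinearPMap_graph_eq _ ?_).symm⟩
  rintro ⟨x, k⟩ hx hx0
  simp only at hx0
  subst hx0
  -- (0, k) is in the closure of graph X; push through Q × Q
  have hcont : Continuous (fun p : H₁ × H₁ => ((Q p.1 : H₂), (Q p.2 : H₂))) := by
    fun_prop
  have himg : ((0 : H₂), Q k) ∈ closure (G₂ : Set (H₂ × H₂)) := by
    have h1 : ((0 : H₂), Q k) =
        (fun p : H₁ × H₁ => ((Q p.1 : H₂), (Q p.2 : H₂))) (0, k) := by simp
    rw [h1]
    refine (image_closure_subset_closure_image hcont) ?_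
    refine ⟨(0, k), hx, rfl⟩
  have hG₂cl : closure (G₂ : Set (H₂ × H₂)) = (Y'.graph : Set (H₂ × H₂)) := by
    rw [← hYgraph, ← hY']; rfl
  rw [hG₂cl] at himg
  have : Q k = 0 := Y'.graph_fst_eq_zero_snd himg rfl
  simpa using hQinj (by simpa using this)
end

section
/- Suppose A₁, A₂ are unital operator algebras and Q : H₁ → H₂ is a quasiaffinity such that Q⁻¹A₂Q ⊆ A₁ (in the sense that for each T₂ ∈ A₂ there is T₁ ∈ A₁ with QT₁ = T₂Q). If A₂ is confluent, then A₁ is confluent. -/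
/-- If Q : H₁ → H₂ is a quasiaffinity with Q⁻¹A₂Q ⊆ A₁ (every T₂ ∈ A₂
satisfies Q T₁ = T₂ Q for some T₁ ∈ A₁) and A₂ is confluent, then A₁ is confluent. -/
theorem stmt13 {H₁ H₂ : Type*} [NormedAddCommGroup H₁] [InnerProductSpace ℂ H₁]
    [CompleteSpace H₁] [NormedAddCommGroup H₂] [InnerProductSpace ℂ H₂] [CompleteSpace H₂]
    (A₁ : Subalgebra ℂ (H₁ →L[ℂ] H₁)) (A₂ : Subalgebra ℂ (H₂ →L[ℂ] H₂))
    (Q : H₁ →L[ℂ] H₂) (hQinj : Function.Injective Q) (hQdr : DenseRange Q)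
    (hint : ∀ T₂ ∈ A₂, ∃ T₁ ∈ A₁, Q.comp T₁ = T₂.comp Q)
    (hA₂ : ConfluentOn (A₂ : Set (H₂ →L[ℂ] H₂))) :
    ConfluentOn (A₁ : Set (H₁ →L[ℂ] H₁)) := by
  intro h₁ h₂ hh₁ hh₂
  have hQ1 : Q h₁ ≠ 0 := fun h => hh₁ (hQinj (by simpa using h))
  have hQ2 : Q h₂ ≠ 0 := fun h => hh₂ (hQinj (by simpa using h))
  obtain ⟨B₁, hB₁, B₂, hB₂, hB₁i, hB₂i, hmatch⟩ := hA₂ (Q h₁) (Q h₂) hQ1 hQ2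
  obtain ⟨T₁, hT₁, hc₁⟩ := hint B₁ hB₁
  obtain ⟨T₂, hT₂, hc₂⟩ := hint B₂ hB₂
  have e₁ : ∀ x, Q (T₁ x) = B₁ (Q x) := fun x => ContinuousLinearMap.ext_iff.mp hc₁ x
  have e₂ : ∀ x, Q (T₂ x) = B₂ (Q x) := fun x => ContinuousLinearMap.ext_iff.mp hc₂ x
  refine ⟨T₁, hT₁, T₂, hT₂, ?_, ?_, ?_⟩
  · intro x y hxy
    exact hQinj (hB₁i (by rw [← e₁, ← e₁, hxy]))
  · intro x y hxy
    exact hQinj (hB₂i (by rw [← e₂, ← e₂, hxy]))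
  · exact hQinj (by rw [e₁, e₂, hmatch])
end
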